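/- Let G be a compactly generated totally disconnected locally compact Hausdorff group which is quasi-discrete. Then the compact open normal subgroups of G form a basis of identity neighbourhoods; in particular, every compact open subgroup of G contains a compact open normal subgroup of G. -/

import Mathlib

open scoped Pointwise Topology

/-- A topological group is *compactly generated* if it is generated, as a group,
by some compact subset. -/
def CompactlyGeneratedGroup (G : Type*) [Group G] [TopologicalSpace G] : Prop :=
  ∃ S : Set G, IsCompact S ∧ Subgroup.closure S = ⊤

/-- A topological group is *topologically simple* if it is non-trivial and its only
closed normal subgroups are the trivial subgroup and the whole group. -/
def IsTopologicallySimple (G : Type*) [Group G] [TopologicalSpace G] : Prop :=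
  Nontrivial G ∧ ∀ H : Subgroup G, H.Normal → IsClosed (H : Set G) → H = ⊥ ∨ H = ⊤

/-- Two topological groups are *topologically isomorphic* if there is a group
isomorphism between them which is also a homeomorphism. -/
def TopIsomorphic (G H : Type*) [Group G] [TopologicalSpace G] [Group H]
    [TopologicalSpace H] : Prop :=
  ∃ e : G ≃* H, Continuous e ∧ Continuous e.symm

/-- `G` is a quasi-product with quasi-factors `N 0, …, N (p-1)` if these are closed
normal subgroups of `G` such that the multiplication map `N 0 × ⋯ × N (p-1) → G`
is injective with dense image. -/
def IsQuasiProduct {G : Type*} [Group G] [TopologicalSpace G] {p : ℕ}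
    (N : Fin p → Subgroup G) : Prop :=
  (∀ i, (N i).Normal) ∧ (∀ i, IsClosed ((N i) : Set G)) ∧
  Function.Injective (fun x : (∀ i, ↥(N i)) => (List.ofFn fun i => (x i : G)).prod) ∧
  DenseRange (fun x : (∀ i, ↥(N i)) => (List.ofFn fun i => (x i : G)).prod)

/-!
Let `U` be a compact open subgroup. As `QZ(G)` is dense, every coset `s U` meets it, so a compact
generating set is covered by finitely many cosets `d U` with `d ∈ QZ(G)`: `G` is generated by `U`
and a finite set `F ⊆ QZ(G)`. Then `W = U ∩ C_G(F)` is open, and since `U` is compact the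
intersection `V` of the conjugates `k⁻¹ W k`, `k ∈ U`, is still open (tube lemma). It is a compact
open subgroup normalised by `U` and centralised by `F`, hence normal in `G = ⟨U ∪ F⟩`. Van Dantzig's
theorem supplies compact open subgroups inside every identity neighbourhood.
-/

open Set Filter

theorem exists_isCompact_isOpen_subset_of_mem_nhds {X : Type*} [TopologicalSpace X]
    [LocallyCompactSpace X] [T2Space X] [TotallyDisconnectedSpace X] {x : X} {U : Set X}
    (hU : U ∈ 𝓝 x) : ∃ W, IsCompact W ∧ IsOpen W ∧ x ∈ W ∧ W ⊆ U := by
  obtain ⟨K, hK, hKU, hKc⟩ := local_compact_nhds hU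
  obtain ⟨W, hW, hxW, hWint⟩ :=
    loc_compact_Haus_tot_disc_of_zero_dim.mem_nhds_iff.mp (interior_mem_nhds.mpr hK)
  have hWK : W ⊆ K := hWint.trans interior_subset
  exact ⟨W, hKc.of_isClosed_subset (hW : IsClopen W).isClosed hWK, (hW : IsClopen W).isOpen, hxW,
    hWK.trans hKU⟩

section

variable {G : Type*} [Group G]

namespace Subgroup

/-- When `K` is a subgroup, this is the largest subgroup of `W` normalised by `K`. -/
def conjCore (K : Set G) (W : Subgroup G) : Subgroup G :=
  ⨅ k ∈ K, W.comap (MulAut.conj k).toMonoidHom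

theorem mem_conjCore {K : Set G} {W : Subgroup G} {g : G} :
    g ∈ conjCore K W ↔ ∀ k ∈ K, k * g * k⁻¹ ∈ W := by
  simp [conjCore, mem_iInf]

theorem conjCore_le {K : Set G} (W : Subgroup G) (hK : 1 ∈ K) : conjCore K W ≤ W :=
  fun g hg => by simpa using mem_conjCore.mp hg 1 hK

theorem le_normalizer_conjCore (U W : Subgroup G) : U ≤ normalizer (conjCore U W : Set G) := by
  intro u hu
  refine mem_normalizer_iff.mpr fun g => ⟨fun hg => ?_, fun hg => ?_⟩ <;>
    refine mem_conjCore.mpr fun k hk => ?_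
  · simpa [mul_assoc] using mem_conjCore.mp hg (k * u) (U.mul_mem hk hu)
  · simpa [mul_assoc] using mem_conjCore.mp hg (k * u⁻¹) (U.mul_mem hk (U.inv_mem hu))

end Subgroup

end

def quasiCenter (G : Type*) [Group G] [TopologicalSpace G] : Set G :=
  {x | IsOpen ((Subgroup.centralizer {x} : Subgroup G) : Set G)}

section

variable {G : Type*} [Group G] [TopologicalSpace G] [IsTopologicalGroup G]

theorem Subgroup.isOpen_conjCore {K : Set G} (hK : IsCompact K) {W : Subgroup G}
    (hW : IsOpen (W : Set G)) : IsOpen (conjCore K W : Set G) := by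
  refine Subgroup.isOpen_of_mem_nhds _ (g := 1) ?_
  have : ∀ᶠ g in 𝓝 (1 : G), ∀ k ∈ K, k * g * k⁻¹ ∈ W :=
    hK.eventually_forall_of_forall_eventually fun k _ => by
      have hcont : Continuous fun p : G × G => p.2 * p.1 * p.2⁻¹ := by fun_prop
      exact hcont.continuousAt.preimage_mem_nhds (hW.mem_nhds (by simp))
  filter_upwards [this] with g hg using Subgroup.mem_conjCore.mpr hg

theorem isOpen_centralizer_of_finite_subset_quasiCenter {F : Set G} (hF : F.Finite)
    (hFQ : F ⊆ quasiCenter G) : IsOpen (Subgroup.centralizer F : Set G) := by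
  refine Subgroup.isOpen_of_mem_nhds _ (g := 1) ?_
  have : ∀ᶠ g in 𝓝 (1 : G), ∀ f ∈ F, g ∈ Subgroup.centralizer {f} :=
    hF.eventually_all.mpr fun f hf => (hFQ hf).mem_nhds (Subgroup.one_mem _)
  filter_upwards [this] with g hg f hf
  exact Subgroup.mem_centralizer_singleton_iff.mp (hg f hf) |>.symm

theorem isOpen_stabilizer_of_isCompact_of_isOpen {W : Set G} (hc : IsCompact W)
    (ho : IsOpen W) : IsOpen (MulAction.stabilizer G W : Set G) := by
  obtain ⟨T, hT, hTW⟩ := compact_open_separated_mul_left hc ho subset_rfl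
  have smul_subset : ∀ g ∈ T, g • W ⊆ W := fun g hg _ ⟨w, hw, e⟩ => e ▸ hTW (mul_mem_mul hg hw)
  refine Subgroup.isOpen_of_mem_nhds _ (g := 1)
    (mem_of_superset (inter_mem hT (inv_mem_nhds_one G hT)) ?_)
  rintro g ⟨hg, hg'⟩
  exact (smul_subset g hg).antisymm (subset_smul_set_iff.mpr (smul_subset g⁻¹ hg'))

/-- Van Dantzig's theorem. -/
theorem exists_isCompact_isOpen_subgroup_subset [LocallyCompactSpace G] [T2Space G]
    [TotallyDisconnectedSpace G] {U : Set G} (hU : U ∈ 𝓝 1) :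
    ∃ V : Subgroup G, IsCompact (V : Set G) ∧ IsOpen (V : Set G) ∧ (V : Set G) ⊆ U := by
  obtain ⟨W, hWc, hWo, h1W, hWU⟩ := exists_isCompact_isOpen_subset_of_mem_nhds hU
  have hsub : (MulAction.stabilizer G W : Set G) ⊆ W := fun g hg => by
    simpa using (MulAction.mem_stabilizer_iff.mp hg).subset (smul_mem_smul_set h1W)
  have ho := isOpen_stabilizer_of_isCompact_of_isOpen hWc hWo
  exact ⟨_, hWc.of_isClosed_subset (Subgroup.isClosed_of_isOpen _ ho) hsub, ho, hsub.trans hWU⟩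

theorem CompactlyGeneratedGroup.exists_finite_subset_closure_union_eq_top
    (hG : CompactlyGeneratedGroup G) {D : Set G} (hD : Dense D) {U : Subgroup G}
    (hU : IsOpen (U : Set G)) :
    ∃ F ⊆ D, F.Finite ∧ Subgroup.closure ((U : Set G) ∪ F) = ⊤ := by
  obtain ⟨S, hSc, hS⟩ := hG
  have hcover : S ⊆ ⋃ d ∈ D, d • (U : Set G) := fun s _ => by
    obtain ⟨d, hdD, u, hu, rfl⟩ :=
      hD.exists_mem_open (hU.smul s) ⟨s, 1, U.one_mem, mul_one s⟩
    exact mem_biUnion hdD ⟨u⁻¹, U.inv_mem hu, by simp⟩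
  obtain ⟨F, hFD, hF, hSF⟩ := hSc.elim_finite_subcover_image (fun d _ => hU.smul d) hcover
  refine ⟨F, hFD, hF, eq_top_iff.mpr (hS ▸ (Subgroup.closure_le _).mpr fun s hs => ?_)⟩
  obtain ⟨d, hdF, u, hu, rfl⟩ := mem_iUnion₂.mp (hSF hs)
  exact Subgroup.mul_mem _ (Subgroup.subset_closure (Or.inr hdF))
    (Subgroup.subset_closure (Or.inl hu))

theorem CompactlyGeneratedGroup.exists_normal_isCompact_isOpen_le
    (hG : CompactlyGeneratedGroup G) (hQZ : Dense (quasiCenter G)) (U : Subgroup G)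
    (hUc : IsCompact (U : Set G)) (hUo : IsOpen (U : Set G)) :
    ∃ V : Subgroup G, V.Normal ∧ IsCompact (V : Set G) ∧ IsOpen (V : Set G) ∧ V ≤ U := by
  obtain ⟨F, hFQ, hF, hgen⟩ := hG.exists_finite_subset_closure_union_eq_top hQZ hUo
  set W := U ⊓ Subgroup.centralizer F
  set V := Subgroup.conjCore U W
  have hVW : V ≤ W := Subgroup.conjCore_le W U.one_mem
  have hVU : V ≤ U := hVW.trans inf_le_left
  have hVo : IsOpen (V : Set G) := Subgroup.isOpen_conjCore hUc
    (hUo.inter (isOpen_centralizer_of_finite_subset_quasiCenter hF hFQ))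
  have hFV : F ⊆ Subgroup.centralizer (V : Set G) := fun f hf v hv =>
    (Subgroup.mem_centralizer_iff.mp ((hVW.trans inf_le_right) hv) f hf).symm
  have hnormal : V.Normal := by
    rw [← Subgroup.normalizer_eq_top_iff, eq_top_iff, ← hgen, Subgroup.closure_le]
    exact union_subset (Subgroup.le_normalizer_conjCore U W)
      (hFV.trans (Subgroup.centralizer_le_normalizer _))
  exact ⟨V, hnormal, hUc.of_isClosed_subset (V.isClosed_of_isOpen hVo) hVU, hVo, hVU⟩

end

/-- **Proposition (Barnea–Ershov–Weigel; Caprace–Monod).** In any quasi-discrete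
compactly generated totally disconnected locally compact Hausdorff group, the
compact open normal subgroups form a basis of identity neighbourhoods; in
particular every compact open subgroup contains a compact open normal subgroup. -/
theorem quasi_discrete_basis (G : Type*) [Group G] [TopologicalSpace G]
    [IsTopologicalGroup G] [LocallyCompactSpace G] [T2Space G]
    [TotallyDisconnectedSpace G]
    (hcg : CompactlyGeneratedGroup G)
    (hqd : Dense {x : G | IsOpen ((Subgroup.centralizer {x} : Subgroup G) : Set G)}) :
    (∀ U ∈ nhds (1 : G), ∃ V : Subgroup G, V.Normal ∧ IsCompact (V : Set G) ∧
      IsOpen (V : Set G) ∧ (V : Set G) ⊆ U) ∧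
    (∀ U : Subgroup G, IsCompact (U : Set G) → IsOpen (U : Set G) →
      ∃ V : Subgroup G, V.Normal ∧ IsCompact (V : Set G) ∧ IsOpen (V : Set G) ∧
        V ≤ U) := by
  have core := hcg.exists_normal_isCompact_isOpen_le hqd
  refine ⟨fun U hU => ?_, core⟩
  obtain ⟨U', hU'c, hU'o, hU'U⟩ := exists_isCompact_isOpen_subgroup_subset hU
  obtain ⟨V, hVn, hVc, hVo, hVU'⟩ := core U' hU'c hU'o
  exact ⟨V, hVn, hVc, hVo, (SetLike.coe_subset_coe.mpr hVU').trans hU'U⟩
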